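/- Let (b,ψ) be any configuration on ℝ², let ε > 0, let n ≥ 3, and let (c,f) be a smooth compactly supported pair on ℝⁿ = ℝ^{n−2} × ℝ², with c = (c₁,…,c_n) : ℝⁿ → ℝⁿ and f : ℝⁿ → ℂ. Writing 𝕃_ε(c,f) = (g, h) with g : ℝⁿ → ℝⁿ and h : ℝⁿ → ℂ, the following integration-by-parts identity holds: ∫_{ℝⁿ} [ε²·Σ_{k=1}^n c_k g_k + Re(conj(f)·h)] = ∫_{ℝⁿ} [ε²·Σ_{1 ≤ j < k ≤ n}(∂_jc_k − ∂_kc_j)² + ε²·(Σ_{k=1}^n ∂_kc_k)² + Σ_{k=1}^n |D_kf|²] − 4·Σ_{k=1}^n ∫_{ℝⁿ} c_k·Im(conj(D_kψ)·f) + ∫_{ℝⁿ} [|ψ|²·Σ_{k=1}^n c_k² + ε⁻²|ψ|²|f|² − (1/(2ε²))(1 − |ψ|²)|f|²]. -/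

import Mathlib

noncomputable section

open Complex MeasureTheory Filter ENNReal

/-- The plane `ℝ²`. -/
abbrev Plane := EuclideanSpace ℝ (Fin 2)

/-- Partial derivative on the plane in the `j`-th coordinate direction. -/
def pdP (j : Fin 2) {V : Type*} [NormedAddCommGroup V] [NormedSpace ℝ V]
    (g : Plane → V) (y : Plane) : V :=
  fderiv ℝ g y (EuclideanSpace.single j 1)

/-- First covariant derivative `D₁u = ∂₁u + i b₁ u` on the plane. -/
def D1 (b1 : Plane → ℝ) (ψ : Plane → ℂ) (y : Plane) : ℂ := pdP 0 ψ y + I * b1 y * ψ y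

/-- Second covariant derivative `D₂u = ∂₂u + i b₂ u` on the plane. -/
def D2 (b2 : Plane → ℝ) (ψ : Plane → ℂ) (y : Plane) : ℂ := pdP 1 ψ y + I * b2 y * ψ y

/-- Curvature `F₁₂ = ∂₁b₂ − ∂₂b₁` on the plane. -/
def F12 (b1 b2 : Plane → ℝ) (y : Plane) : ℝ := pdP 0 b2 y - pdP 1 b1 y

/-- A one-vortex solution for parameter `ε`, with decay constants `C₀` and `μ₀`. -/
def IsOneVortex (ε C₀ μ₀ : ℝ) (b1 b2 : Plane → ℝ) (ψ : Plane → ℂ) : Prop :=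
  ContDiff ℝ (⊤ : ℕ∞) b1 ∧ ContDiff ℝ (⊤ : ℕ∞) b2 ∧ ContDiff ℝ (⊤ : ℕ∞) ψ ∧
  (∀ y, ε * F12 b1 b2 y = (1 - ‖ψ y‖ ^ 2) / (2 * ε)) ∧
  (∀ y, D1 b1 ψ y - I * D2 b2 ψ y = 0) ∧
  (∫ y : Plane, F12 b1 b2 y) = 2 * Real.pi ∧
  0 < C₀ ∧ μ₀ ∈ Set.Ioc (0 : ℝ) 1 ∧
  ∀ y : Plane,
    0 ≤ 1 - ‖ψ y‖ ^ 2 ∧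
    1 - ‖ψ y‖ ^ 2 ≤ C₀ * Real.exp (-(μ₀ * ‖y‖) / ε) ∧
    ‖D1 b1 ψ y‖ ≤ C₀ * ε⁻¹ * Real.exp (-(μ₀ * ‖y‖) / ε) ∧
    ‖D2 b2 ψ y‖ ≤ C₀ * ε⁻¹ * Real.exp (-(μ₀ * ‖y‖) / ε) ∧
    |F12 b1 b2 y| ≤ C₀ * ε⁻¹ ^ 2 * Real.exp (-(μ₀ * ‖y‖) / ε)

/-- The total space `ℝⁿ = ℝ^{n-2} × ℝ²` with `m = n - 2`. -/
abbrev Tot (m : ℕ) := EuclideanSpace ℝ (Fin m) × Plane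

/-- The `k`-th coordinate direction in `ℝⁿ = ℝ^{n-2} × ℝ²`. -/
def dir (m : ℕ) (k : Fin (m + 2)) : Tot m :=
  if h : (k : ℕ) < m then (EuclideanSpace.single ⟨(k : ℕ), h⟩ 1, 0)
  else (0, EuclideanSpace.single ⟨(k : ℕ) - m, by have := k.isLt; omega⟩ 1)

/-- Directional derivative on the total space. -/
def pdT {m : ℕ} (v : Tot m) {V : Type*} [NormedAddCommGroup V] [NormedSpace ℝ V]
    (f : Tot m → V) (p : Tot m) : V :=
  fderiv ℝ f p v

/-- The Euclidean Laplacian on the total space. -/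
def lapT {m : ℕ} (f : Tot m → ℝ) (p : Tot m) : ℝ :=
  ∑ k : Fin (m + 2), pdT (dir m k) (fun q => pdT (dir m k) f q) p

/-- The connection coefficients on the total space: `0` in the `ℝ^{n-2}` directions,
`b₁`, `b₂` in the two `ℝ²` directions. -/
def Bf {m : ℕ} (b1 b2 : Plane → ℝ) (k : Fin (m + 2)) (p : Tot m) : ℝ :=
  if (k : ℕ) = m then b1 p.2 else if (k : ℕ) = m + 1 then b2 p.2 else 0

/-- Covariant derivative `D_k f = ∂_k f + i B_k f` on the total space. -/
def DT {m : ℕ} (b1 b2 : Plane → ℝ) (k : Fin (m + 2)) (f : Tot m → ℂ) (p : Tot m) : ℂ :=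
  pdT (dir m k) f p + I * (Bf b1 b2 k p : ℂ) * f p

/-- The covariant derivative of the lifted vortex section: `0` in the `ℝ^{n-2}` directions,
`D₁ψ`, `D₂ψ` in the two `ℝ²` directions. -/
def DPsi {m : ℕ} (b1 b2 : Plane → ℝ) (ψ : Plane → ℂ) (k : Fin (m + 2)) (p : Tot m) : ℂ :=
  if (k : ℕ) = m then D1 b1 ψ p.2 else if (k : ℕ) = m + 1 then D2 b2 ψ p.2 else 0

/-- The linearized operator `𝕃_ε` on pairs `(c, f)`. -/
def Lop {m : ℕ} (ε : ℝ) (b1 b2 : Plane → ℝ) (ψ : Plane → ℂ)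
    (c : Tot m → EuclideanSpace ℝ (Fin (m + 2))) (f : Tot m → ℂ) :
    (Tot m → EuclideanSpace ℝ (Fin (m + 2))) × (Tot m → ℂ) :=
  (fun p => (WithLp.toLp 2 (fun k => -lapT (fun q => c q k) p + ε⁻¹ ^ 2 * ‖ψ p.2‖ ^ 2 * c p k
      - 2 * ε⁻¹ ^ 2 * ((starRingEnd ℂ) (DPsi b1 b2 ψ k p) * f p).im) :
        EuclideanSpace ℝ (Fin (m + 2))),
   fun p => -(∑ k : Fin (m + 2), DT b1 b2 k (fun q => DT b1 b2 k f q) p)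
      + ((ε⁻¹ ^ 2 * ‖ψ p.2‖ ^ 2 : ℝ) : ℂ) * f p
      - ((1 / (2 * ε ^ 2) * (1 - ‖ψ p.2‖ ^ 2) : ℝ) : ℂ) * f p
      - 2 * I * ∑ k : Fin (m + 2), ((c p k : ℝ) : ℂ) * DPsi b1 b2 ψ k p)

/-- The weighted sup norm `‖u‖_{C⁰_{μ,ε}}` on the total space. -/
def C0n {m : ℕ} (μ ε : ℝ) {V : Type*} [NormedAddCommGroup V] (u : Tot m → V) : ℝ≥0∞ :=
  ⨆ p : Tot m, ENNReal.ofReal (Real.exp (μ * ‖p.2‖ / ε) * ‖u p‖)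

/-- The weighted Hölder seminorm on the total space. -/
def Holn {m : ℕ} (μ ε γ : ℝ) {V : Type*} [NormedAddCommGroup V] (u : Tot m → V) : ℝ≥0∞ :=
  ⨆ q : {pq : Tot m × Tot m // pq.1 ≠ pq.2 ∧
      ‖pq.1.1 - pq.2.1‖ + ‖pq.1.2 - pq.2.2‖ ≤ ε},
    ENNReal.ofReal (ε ^ γ * Real.exp (μ * (‖q.1.1.2‖ + ‖q.1.2.2‖) / (2 * ε)) *
      (‖u q.1.1 - u q.1.2‖ / (‖q.1.1.1 - q.1.2.1‖ + ‖q.1.1.2 - q.1.2.2‖) ^ γ))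

/-- The weighted Hölder norm `‖u‖_{C^γ_{μ,ε}}` on the total space. -/
def Cgn {m : ℕ} (μ ε γ : ℝ) {V : Type*} [NormedAddCommGroup V] (u : Tot m → V) : ℝ≥0∞ :=
  C0n μ ε u + Holn μ ε γ u

/-- The weighted Hölder norm `‖u‖_{C^{k,γ}_{μ,ε}}` on the total space. -/
def Ckgn {m : ℕ} (k : ℕ) (μ ε γ : ℝ) {V : Type*} [NormedAddCommGroup V] [NormedSpace ℝ V]
    (u : Tot m → V) : ℝ≥0∞ :=
  ∑ l ∈ Finset.range (k + 1), ENNReal.ofReal (ε ^ l) * Cgn μ ε γ (iteratedFDeriv ℝ l u)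

/-- The weighted Hölder norm `‖(c,f)‖_{C^{k,γ}_{μ,ε}} = ε‖c‖ + ‖f‖` for pairs. -/
def PairN {m : ℕ} (k : ℕ) (μ ε γ : ℝ)
    (c : Tot m → EuclideanSpace ℝ (Fin (m + 2))) (f : Tot m → ℂ) : ℝ≥0∞ :=
  ENNReal.ofReal ε * Ckgn k μ ε γ c + Ckgn k μ ε γ f

/-- The fiberwise orthogonality conditions. -/
def FiberOrtho {m : ℕ} (ε : ℝ) (b1 b2 : Plane → ℝ) (ψ : Plane → ℂ)
    (c : Tot m → EuclideanSpace ℝ (Fin (m + 2))) (f : Tot m → ℂ) : Prop :=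
  ∀ (x : EuclideanSpace ℝ (Fin m)) (w1 w2 : ℝ),
    (∫ y : Plane,
      (ε ^ 2 * F12 b1 b2 y *
          (-(w2 * c (x, y) ⟨m, by omega⟩) + w1 * c (x, y) ⟨m + 1, by omega⟩)
        + ((starRingEnd ℂ) (f (x, y)) *
            ((w1 : ℂ) * D1 b1 ψ y + (w2 : ℂ) * D2 b2 ψ y)).re)) = 0

/-- Membership in the space `E^{k,γ}_{μ,ε}`: smooth, finite weighted norm, and fiberwise
orthogonality. -/
def memE {m : ℕ} (k : ℕ) (μ ε γ : ℝ) (b1 b2 : Plane → ℝ) (ψ : Plane → ℂ)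
    (c : Tot m → EuclideanSpace ℝ (Fin (m + 2))) (f : Tot m → ℂ) : Prop :=
  ContDiff ℝ (⊤ : ℕ∞) c ∧ ContDiff ℝ (⊤ : ℕ∞) f ∧
    PairN k μ ε γ c f < ⊤ ∧ FiberOrtho ε b1 b2 ψ c f

/-! Pointwise, the pairing density equals the right-hand density plus a divergence.
For the vector part, `-c_k ∂_j∂_j c_k = (∂_j c_k)² - ∂_j(c_k ∂_j c_k)`, and
`Σ (∂_j c_k)² = Σ_{j<k} (∂_j c_k - ∂_k c_j)² + (div c)² + Σ (∂_j c_k ∂_k c_j - ∂_j c_j ∂_k c_k)`,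
where the last sum equals `Σ ∂_j(c_k ∂_k c_j) - ∂_k(c_k ∂_j c_j)` by symmetry of second
derivatives. For the scalar part, `Re(f̄ D_k D_k f) = ∂_k Re(f̄ D_k f) - |D_k f|²` because
multiplication by `i b_k` is skew-adjoint for `Re(z̄ w)`. Each of the two coupling terms of `𝕃_ε`
contributes `-2 c_k Im(conj(D_kψ) f)`. Since `c` and `f` have compact support, the divergences
integrate to zero. -/

instance (m : ℕ) : (volume : Measure (Tot m)).IsAddHaarMeasure :=
  Measure.prod.instIsAddHaarMeasure _ _

section IntegrationByParts
variable {E : Type*} [NormedAddCommGroup E] [NormedSpace ℝ E] [MeasurableSpace E] [BorelSpace E]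
  {μ : Measure E} {u : E → ℝ}

theorem integrable_fderiv_apply [IsFiniteMeasureOnCompacts μ] (hu : ContDiff ℝ 1 u)
    (hus : HasCompactSupport u) (v : E) :
    Integrable (fun x => fderiv ℝ u x v) μ :=
  ((hu.continuous_fderiv_apply one_ne_zero).comp (continuous_id.prodMk continuous_const)
    |>.integrable_of_hasCompactSupport (hus.fderiv_apply ℝ v))

theorem integral_fderiv_apply_eq_zero [FiniteDimensional ℝ E] [μ.IsAddHaarMeasure]
    (hu : ContDiff ℝ 1 u) (hus : HasCompactSupport u) (v : E) : ∫ x, fderiv ℝ u x v ∂μ = 0 := by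
  simpa using integral_mul_fderiv_eq_neg_fderiv_mul_of_integrable (μ := μ)
    (f := fun _ => (1 : ℝ)) (g := u) (v := v) (by simp)
    (by simpa using integrable_fderiv_apply hu hus v)
    (by simpa using hu.continuous.integrable_of_hasCompactSupport hus)
    (fun _ _ => differentiableAt_const _) (fun x _ => hu.differentiable one_ne_zero x)

end IntegrationByParts

section pdT
variable {m : ℕ} {V : Type*} [NormedAddCommGroup V] [NormedSpace ℝ V]

theorem contDiff_pdT {n : WithTop ℕ∞} {u : Tot m → V} (hu : ContDiff ℝ (n + 1) u) (v : Tot m) :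
    ContDiff ℝ n (pdT v u) :=
  (hu.fderiv_right le_rfl).clm_apply contDiff_const

theorem pdT_eq_zero_of_notMem_tsupport {u : Tot m → V} {p : Tot m} (hp : p ∉ tsupport u)
    (v : Tot m) : pdT v u p = 0 := by
  simp [pdT, fderiv_of_notMem_tsupport ℝ hp]

theorem pdT_mul {u w : Tot m → ℝ} {p : Tot m} (hu : DifferentiableAt ℝ u p)
    (hw : DifferentiableAt ℝ w p) (v : Tot m) :
    pdT v (fun q => u q * w q) p = pdT v u p * w p + u p * pdT v w p := by
  simp only [pdT, fderiv_fun_mul hu hw, add_apply, smul_apply, smul_eq_mul]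
  ring

theorem pdT_pdT_comm {u : Tot m → ℝ} (hu : ContDiff ℝ 2 u) (v w p : Tot m) :
    pdT v (pdT w u) p = pdT w (pdT v u) p := by
  have hu' : DifferentiableAt ℝ (fderiv ℝ u) p :=
    (hu.fderiv_right le_rfl).differentiable one_ne_zero p
  have key : ∀ a b : Tot m, pdT a (pdT b u) p = fderiv ℝ (fderiv ℝ u) p a b := fun a b => by
    show fderiv ℝ (fun q => fderiv ℝ u q b) p a = _
    simp [fderiv_clm_apply hu' (differentiableAt_const b)]
  rw [key, key, hu.contDiffAt.isSymmSndFDerivAt (by simp)]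

theorem pdT_re_conj_mul {f g : Tot m → ℂ} {p : Tot m} (hf : DifferentiableAt ℝ f p)
    (hg : DifferentiableAt ℝ g p) (v : Tot m) :
    pdT v (fun q => ((starRingEnd ℂ) (f q) * g q).re) p
      = ((starRingEnd ℂ) (pdT v f p) * g p).re + ((starRingEnd ℂ) (f p) * pdT v g p).re := by
  have h : ∀ z w : ℂ, ((starRingEnd ℂ) z * w).re = inner ℝ z w := fun z w => by
    rw [Complex.inner, mul_comm]
  simp only [h, pdT, fderiv_inner_apply ℝ hf hg]
  ring

end pdT

section Regularity
variable {m : ℕ} {b1 b2 : Plane → ℝ}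

theorem contDiff_Bf {n : WithTop ℕ∞} (hb1 : ContDiff ℝ n b1) (hb2 : ContDiff ℝ n b2)
    (k : Fin (m + 2)) : ContDiff ℝ n (Bf b1 b2 k) := by
  unfold Bf
  split_ifs
  · exact hb1.comp contDiff_snd
  · exact hb2.comp contDiff_snd
  · exact contDiff_const

theorem contDiff_DT {n : WithTop ℕ∞} (hb1 : ContDiff ℝ n b1) (hb2 : ContDiff ℝ n b2)
    {f : Tot m → ℂ} (hf : ContDiff ℝ (n + 1) f) (k : Fin (m + 2)) :
    ContDiff ℝ n (DT b1 b2 k f) :=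
  (contDiff_pdT hf _).add <| (contDiff_const.mul <| ofRealCLM.contDiff.comp <|
    contDiff_Bf hb1 hb2 k).mul (hf.of_le le_self_add)

theorem DT_eq_zero_of_notMem_tsupport {f : Tot m → ℂ} {p : Tot m} (hp : p ∉ tsupport f)
    (k : Fin (m + 2)) : DT b1 b2 k f p = 0 := by
  simp [DT, pdT_eq_zero_of_notMem_tsupport hp, image_eq_zero_of_notMem_tsupport hp]

theorem continuous_DPsi {ψ : Plane → ℂ} (hb1 : Continuous b1) (hb2 : Continuous b2)
    (hψ : ContDiff ℝ 1 ψ) (k : Fin (m + 2)) : Continuous (DPsi b1 b2 ψ k) := by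
  have hD : ∀ (j : Fin 2) (b : Plane → ℝ), Continuous b →
      Continuous fun y => pdP j ψ y + I * b y * ψ y := fun j b hb =>
    ((hψ.continuous_fderiv_apply one_ne_zero).comp (continuous_id.prodMk continuous_const)).add
      ((continuous_const.mul (Complex.continuous_ofReal.comp hb)).mul hψ.continuous)
  unfold DPsi
  split_ifs
  · exact (hD 0 b1 hb1).comp continuous_snd
  · exact (hD 1 b2 hb2).comp continuous_snd
  · exact continuous_const

end Regularity

theorem re_conj_mul_DT_DT {m : ℕ} {b1 b2 : Plane → ℝ} {k : Fin (m + 2)} {f : Tot m → ℂ}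
    {p : Tot m} (hf : DifferentiableAt ℝ f p) (hDf : DifferentiableAt ℝ (DT b1 b2 k f) p) :
    ((starRingEnd ℂ) (f p) * DT b1 b2 k (DT b1 b2 k f) p).re
      = pdT (dir m k) (fun q => ((starRingEnd ℂ) (f q) * DT b1 b2 k f q).re) p
        - ‖DT b1 b2 k f p‖ ^ 2 := by
  have hpdT : pdT (dir m k) f p = DT b1 b2 k f p - I * Bf b1 b2 k p * f p := by
    simp only [DT]; ring
  rw [pdT_re_conj_mul hf hDf, hpdT, DT]
  generalize DT b1 b2 k f p = G
  simp only [Complex.sq_norm, Complex.normSq_apply, Complex.mul_re, Complex.mul_im,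
    Complex.add_re, Complex.add_im, Complex.sub_re, Complex.sub_im, Complex.conj_re,
    Complex.conj_im, Complex.I_re, Complex.I_im, Complex.ofReal_re, Complex.ofReal_im]
  ring

theorem sum_ite_lt_sq_sub_add_sq_sum {N : ℕ} (a : Fin N → Fin N → ℝ) :
    ∑ j : Fin N, ∑ k : Fin N, (if (j : ℕ) < (k : ℕ) then (a j k - a k j) ^ 2 else 0)
        + (∑ k : Fin N, a k k) ^ 2
      = ∑ j : Fin N, ∑ k : Fin N, (a j k ^ 2 - a j k * a k j + a j j * a k k) := by
  set S := ∑ j : Fin N, ∑ k : Fin N, (if (j : ℕ) < (k : ℕ) then (a j k - a k j) ^ 2 else 0)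
  -- the summand is symmetric in `(j, k)` and vanishes on the diagonal
  have hsplit : ∀ j k : Fin N, (a j k - a k j) ^ 2
      = (if (j : ℕ) < (k : ℕ) then (a j k - a k j) ^ 2 else 0)
        + (if (k : ℕ) < (j : ℕ) then (a k j - a j k) ^ 2 else 0) := fun j k => by
    rcases lt_trichotomy (j : ℕ) k with h | h | h
    · simp [h, h.not_gt]
    · simp [Fin.ext h]
    · simp [h, h.not_gt]; ring
  have hdouble : ∑ j : Fin N, ∑ k : Fin N, (a j k - a k j) ^ 2 = 2 * S := by
    rw [Finset.sum_congr rfl fun j _ => Finset.sum_congr rfl fun k _ => hsplit j k]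
    simp only [Finset.sum_add_distrib]
    rw [Finset.sum_comm
      (f := fun (j k : Fin N) => if (k : ℕ) < (j : ℕ) then (a k j - a j k) ^ 2 else 0)]
    ring
  have hexpand : ∑ j : Fin N, ∑ k : Fin N, (a j k - a k j) ^ 2
      = 2 * ∑ j : Fin N, ∑ k : Fin N, a j k ^ 2 - 2 * ∑ j : Fin N, ∑ k : Fin N, a j k * a k j := by
    have h : ∀ j k, (a j k - a k j) ^ 2 = a j k ^ 2 + a k j ^ 2 - 2 * (a j k * a k j) :=
      fun j k => by ring
    simp only [h, Finset.sum_add_distrib, Finset.sum_sub_distrib, ← Finset.mul_sum]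
    rw [Finset.sum_comm (f := fun j k => a k j ^ 2)]
    ring
  rw [sq, Finset.sum_mul_sum]
  simp only [Finset.sum_add_distrib, Finset.sum_sub_distrib]
  linarith

theorem neg_sum_mul_sum_pdT_pdT {m N : ℕ} {u : Fin N → Tot m → ℝ}
    (hu : ∀ k, ContDiff ℝ 2 (u k)) (v : Fin N → Tot m) (p : Tot m) :
    -∑ k : Fin N, u k p * ∑ j : Fin N, pdT (v j) (pdT (v j) (u k)) p
      = ∑ j : Fin N, ∑ k : Fin N,
            (if (j : ℕ) < (k : ℕ) then (pdT (v j) (u k) p - pdT (v k) (u j) p) ^ 2 else 0)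
        + (∑ k : Fin N, pdT (v k) (u k) p) ^ 2
        + ∑ j : Fin N, ∑ k : Fin N,
            (pdT (v j) (fun q => u k q * pdT (v k) (u j) q) p
              - pdT (v k) (fun q => u k q * pdT (v j) (u j) q) p
              - pdT (v j) (fun q => u k q * pdT (v j) (u k) q) p) := by
  have hu1 : ∀ k, DifferentiableAt ℝ (u k) p := fun k => (hu k).differentiable two_ne_zero p
  have hdu1 : ∀ j k, DifferentiableAt ℝ (pdT (v j) (u k)) p := fun j k =>
    (contDiff_pdT (n := 1) (hu k) (v j)).differentiable one_ne_zero p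
  have hterm : ∀ j k,
      pdT (v j) (fun q => u k q * pdT (v k) (u j) q) p
          - pdT (v k) (fun q => u k q * pdT (v j) (u j) q) p
          - pdT (v j) (fun q => u k q * pdT (v j) (u k) q) p
        = pdT (v j) (u k) p * pdT (v k) (u j) p - pdT (v j) (u j) p * pdT (v k) (u k) p
          - pdT (v j) (u k) p ^ 2 - u k p * pdT (v j) (pdT (v j) (u k)) p := fun j k => by
    rw [pdT_mul (hu1 k) (hdu1 k j), pdT_mul (hu1 k) (hdu1 j j), pdT_mul (hu1 k) (hdu1 j k),
      pdT_pdT_comm (hu j) (v j) (v k)]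
    ring
  have halg := sum_ite_lt_sq_sub_add_sq_sum fun j k => pdT (v j) (u k) p
  beta_reduce at halg
  rw [halg, Finset.sum_congr rfl fun j _ => Finset.sum_congr rfl fun k _ => hterm j k]
  simp only [← Finset.sum_add_distrib]
  rw [Finset.sum_comm, ← Finset.sum_neg_distrib]
  refine Finset.sum_congr rfl fun k _ => ?_
  rw [Finset.mul_sum, ← Finset.sum_neg_distrib]
  refine Finset.sum_congr rfl fun j _ => ?_
  ring

section Densities
variable {m : ℕ}

def gradientDensity (ε : ℝ) (b1 b2 : Plane → ℝ) (c : Tot m → EuclideanSpace ℝ (Fin (m + 2)))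
    (f : Tot m → ℂ) (p : Tot m) : ℝ :=
  ε ^ 2 * ∑ j : Fin (m + 2), ∑ k : Fin (m + 2),
      (if (j : ℕ) < (k : ℕ) then
        (pdT (dir m j) (fun q => c q k) p - pdT (dir m k) (fun q => c q j) p) ^ 2
      else 0)
    + ε ^ 2 * (∑ k : Fin (m + 2), pdT (dir m k) (fun q => c q k) p) ^ 2
    + ∑ k : Fin (m + 2), ‖DT b1 b2 k f p‖ ^ 2

def couplingDensity (b1 b2 : Plane → ℝ) (ψ : Plane → ℂ)
    (c : Tot m → EuclideanSpace ℝ (Fin (m + 2))) (f : Tot m → ℂ) (k : Fin (m + 2))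
    (p : Tot m) : ℝ :=
  c p k * ((starRingEnd ℂ) (DPsi b1 b2 ψ k p) * f p).im

def potentialDensity (ε : ℝ) (ψ : Plane → ℂ) (c : Tot m → EuclideanSpace ℝ (Fin (m + 2)))
    (f : Tot m → ℂ) (p : Tot m) : ℝ :=
  ‖ψ p.2‖ ^ 2 * ∑ k : Fin (m + 2), (c p k) ^ 2
    + ε⁻¹ ^ 2 * ‖ψ p.2‖ ^ 2 * ‖f p‖ ^ 2
    - 1 / (2 * ε ^ 2) * (1 - ‖ψ p.2‖ ^ 2) * ‖f p‖ ^ 2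

def fluxDivergence (ε : ℝ) (b1 b2 : Plane → ℝ) (c : Tot m → EuclideanSpace ℝ (Fin (m + 2)))
    (f : Tot m → ℂ) (p : Tot m) : ℝ :=
  ε ^ 2 * ∑ j : Fin (m + 2), ∑ k : Fin (m + 2),
      (pdT (dir m j) (fun q => c q k * pdT (dir m k) (fun r => c r j) q) p
        - pdT (dir m k) (fun q => c q k * pdT (dir m j) (fun r => c r j) q) p
        - pdT (dir m j) (fun q => c q k * pdT (dir m j) (fun r => c r k) q) p)
    - ∑ k : Fin (m + 2), pdT (dir m k) (fun q => ((starRingEnd ℂ) (f q) * DT b1 b2 k f q).re) p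

end Densities

theorem Lop_pairing_density_eq {m : ℕ} {ε : ℝ} (hε : ε ≠ 0) {b1 b2 : Plane → ℝ} (ψ : Plane → ℂ)
    (hb1 : ContDiff ℝ 1 b1) (hb2 : ContDiff ℝ 1 b2)
    {c : Tot m → EuclideanSpace ℝ (Fin (m + 2))} {f : Tot m → ℂ}
    (hc : ContDiff ℝ 2 c) (hf : ContDiff ℝ 2 f) (p : Tot m) :
    ε ^ 2 * ∑ k : Fin (m + 2), c p k * (Lop ε b1 b2 ψ c f).1 p k
        + ((starRingEnd ℂ) (f p) * (Lop ε b1 b2 ψ c f).2 p).re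
      = gradientDensity ε b1 b2 c f p - 4 * ∑ k : Fin (m + 2), couplingDensity b1 b2 ψ c f k p
        + potentialDensity ε ψ c f p + fluxDivergence ε b1 b2 c f p := by
  have hvec := neg_sum_mul_sum_pdT_pdT (u := fun k q => c q k)
    (fun k => (contDiff_piLp_apply 2).comp hc) (dir m) p
  have hsc : ∀ k, ((starRingEnd ℂ) (f p) * DT b1 b2 k (fun q => DT b1 b2 k f q) p).re
      = pdT (dir m k) (fun q => ((starRingEnd ℂ) (f q) * DT b1 b2 k f q).re) p
        - ‖DT b1 b2 k f p‖ ^ 2 := fun k =>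
    re_conj_mul_DT_DT (hf.differentiable two_ne_zero p)
      ((contDiff_DT hb1 hb2 hf k).differentiable one_ne_zero p)
  have hvecPart : ε ^ 2 * ∑ k : Fin (m + 2), c p k * (Lop ε b1 b2 ψ c f).1 p k
      = ε ^ 2 * -∑ k : Fin (m + 2), c p k * ∑ j : Fin (m + 2),
            pdT (dir m j) (pdT (dir m j) fun q => c q k) p
        + ‖ψ p.2‖ ^ 2 * ∑ k : Fin (m + 2), (c p k) ^ 2
        - 2 * ∑ k : Fin (m + 2), couplingDensity b1 b2 ψ c f k p := by
    have hk : ∀ k, ε ^ 2 * (c p k * (Lop ε b1 b2 ψ c f).1 p k)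
        = ε ^ 2 * -(c p k * ∑ j : Fin (m + 2), pdT (dir m j) (pdT (dir m j) fun q => c q k) p)
          + ‖ψ p.2‖ ^ 2 * c p k ^ 2 - 2 * couplingDensity b1 b2 ψ c f k p := fun k => by
      simp only [Lop, lapT, PiLp.toLp_apply, couplingDensity]
      field_simp
    rw [Finset.mul_sum, Finset.sum_congr rfl fun k _ => hk k, Finset.sum_sub_distrib,
      Finset.sum_add_distrib, ← Finset.mul_sum, ← Finset.mul_sum, ← Finset.mul_sum,
      Finset.sum_neg_distrib]
  have hre1 : ∀ (r : ℝ) (z : ℂ), ((starRingEnd ℂ) z * (r * z)).re = r * ‖z‖ ^ 2 := by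
    intro r z
    simp [Complex.mul_re, Complex.sq_norm, Complex.normSq_apply]; ring
  have hre2 : ∀ (s : ℝ) (z w : ℂ),
      ((starRingEnd ℂ) z * (2 * I * (s * w))).re = 2 * (s * ((starRingEnd ℂ) w * z).im) := by
    intro s z w
    simp [Complex.mul_re, Complex.mul_im]; ring
  have hscalarPart : ((starRingEnd ℂ) (f p) * (Lop ε b1 b2 ψ c f).2 p).re
      = -∑ k : Fin (m + 2), ((starRingEnd ℂ) (f p) * DT b1 b2 k (fun q => DT b1 b2 k f q) p).re
        + ε⁻¹ ^ 2 * ‖ψ p.2‖ ^ 2 * ‖f p‖ ^ 2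
        - 1 / (2 * ε ^ 2) * (1 - ‖ψ p.2‖ ^ 2) * ‖f p‖ ^ 2
        - 2 * ∑ k : Fin (m + 2), couplingDensity b1 b2 ψ c f k p := by
    simp only [Lop, mul_sub, mul_add, mul_neg, Complex.sub_re, Complex.add_re, Complex.neg_re,
      Finset.mul_sum, Complex.re_sum, hre1, hre2, couplingDensity]
  rw [hvecPart, hscalarPart, hvec]
  simp only [hsc, gradientDensity, potentialDensity, fluxDivergence, Finset.sum_sub_distrib]
  ring

section Integrability
variable {m : ℕ} {b1 b2 : Plane → ℝ} {c : Tot m → EuclideanSpace ℝ (Fin (m + 2))}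
  {f : Tot m → ℂ}

theorem pdT_apply_eq_zero_of_notMem_tsupport {p : Tot m} (hp : p ∉ tsupport c) (v : Tot m)
    (k : Fin (m + 2)) : pdT v (fun q => c q k) p = 0 :=
  pdT_eq_zero_of_notMem_tsupport (fun h => hp <|
    tsupport_comp_subset (g := fun x : EuclideanSpace ℝ (Fin (m + 2)) => x k) rfl c h) v

theorem integrable_gradientDensity (ε : ℝ) (hb1 : Continuous b1) (hb2 : Continuous b2)
    (hc : ContDiff ℝ 1 c) (hf : ContDiff ℝ 1 f) (hcs : HasCompactSupport c)
    (hfs : HasCompactSupport f) : Integrable (gradientDensity ε b1 b2 c f) := by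
  have hdc : ∀ j k : Fin (m + 2), Continuous (pdT (dir m j) fun q => c q k) := fun j k =>
    (contDiff_pdT (n := 0) ((contDiff_piLp_apply 2).comp hc) _).continuous
  have hDT : ∀ k, Continuous (DT b1 b2 k f) := fun k =>
    (contDiff_DT (n := 0) (contDiff_zero.2 hb1) (contDiff_zero.2 hb2) hf k).continuous
  have hcurl : ∀ j k : Fin (m + 2), Continuous fun p => if (j : ℕ) < (k : ℕ) then
      (pdT (dir m j) (fun q => c q k) p - pdT (dir m k) (fun q => c q j) p) ^ 2 else 0 :=
    fun j k => continuous_if_const _ (fun _ => by fun_prop) fun _ => continuous_const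
  refine Continuous.integrable_of_hasCompactSupport ?_ (.intro (hcs.union hfs) fun p hp => ?_)
  · unfold gradientDensity
    fun_prop
  · simp only [Set.mem_union, not_or] at hp
    simp [gradientDensity, pdT_apply_eq_zero_of_notMem_tsupport hp.1,
      DT_eq_zero_of_notMem_tsupport hp.2]

theorem integrable_couplingDensity (ψ : Plane → ℂ) (hb1 : Continuous b1) (hb2 : Continuous b2)
    (hψ : ContDiff ℝ 1 ψ) (hc : Continuous c) (hf : Continuous f) (hcs : HasCompactSupport c)
    (k : Fin (m + 2)) : Integrable (couplingDensity b1 b2 ψ c f k) := by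
  have hDPsi := continuous_DPsi hb1 hb2 hψ k
  refine Continuous.integrable_of_hasCompactSupport ?_ (.intro hcs fun p hp => ?_)
  · unfold couplingDensity
    fun_prop
  · simp [couplingDensity, image_eq_zero_of_notMem_tsupport hp]

theorem integrable_potentialDensity (ε : ℝ) {ψ : Plane → ℂ} (hψ : Continuous ψ)
    (hc : Continuous c) (hf : Continuous f) (hcs : HasCompactSupport c)
    (hfs : HasCompactSupport f) : Integrable (potentialDensity ε ψ c f) := by
  refine Continuous.integrable_of_hasCompactSupport ?_ (.intro (hcs.union hfs) fun p hp => ?_)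
  · unfold potentialDensity
    fun_prop
  · simp only [Set.mem_union, not_or] at hp
    simp [potentialDensity, image_eq_zero_of_notMem_tsupport hp.1,
      image_eq_zero_of_notMem_tsupport hp.2]

end Integrability

theorem integrable_fluxDivergence_and_integral_eq_zero {m : ℕ} (ε : ℝ) {b1 b2 : Plane → ℝ}
    (hb1 : ContDiff ℝ 1 b1) (hb2 : ContDiff ℝ 1 b2)
    {c : Tot m → EuclideanSpace ℝ (Fin (m + 2))} {f : Tot m → ℂ}
    (hc : ContDiff ℝ 2 c) (hf : ContDiff ℝ 2 f) (hcs : HasCompactSupport c)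
    (hfs : HasCompactSupport f) :
    Integrable (fluxDivergence ε b1 b2 c f) ∧ ∫ p, fluxDivergence ε b1 b2 c f p = 0 := by
  have hdiv : ∀ {u : Tot m → ℝ}, ContDiff ℝ 1 u → HasCompactSupport u → ∀ v,
      Integrable (pdT v u) ∧ ∫ p, pdT v u p = 0 := fun hu hus v =>
    ⟨integrable_fderiv_apply hu hus v, integral_fderiv_apply_eq_zero hu hus v⟩
  have hvec : ∀ j k l n : Fin (m + 2), Integrable (pdT (dir m j)
        (fun q => c q k * pdT (dir m l) (fun r => c r n) q)) ∧
      ∫ p, pdT (dir m j) (fun q => c q k * pdT (dir m l) (fun r => c r n) q) p = 0 := by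
    intro j k l n
    have hck : ∀ k, ContDiff ℝ 2 fun q => c q k := fun k => (contDiff_piLp_apply 2).comp hc
    refine hdiv (((hck k).of_le one_le_two).mul (contDiff_pdT (hck n) _)) ?_ _
    exact (hcs.comp_left (g := fun x : EuclideanSpace ℝ (Fin (m + 2)) => x k) rfl).mul_right
  have hscalar : ∀ k : Fin (m + 2), Integrable (pdT (dir m k)
        (fun q => ((starRingEnd ℂ) (f q) * DT b1 b2 k f q).re)) ∧
      ∫ p, pdT (dir m k) (fun q => ((starRingEnd ℂ) (f q) * DT b1 b2 k f q).re) p = 0 := by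
    intro k
    refine hdiv (reCLM.contDiff.comp
      ((conjCLE.contDiff.comp (hf.of_le one_le_two)).mul (contDiff_DT hb1 hb2 hf k))) ?_ _
    exact .intro hfs fun p hp => by simp [image_eq_zero_of_notMem_tsupport hp]
  have hterm : ∀ j k : Fin (m + 2), Integrable (fun p =>
      pdT (dir m j) (fun q => c q k * pdT (dir m k) (fun r => c r j) q) p
        - pdT (dir m k) (fun q => c q k * pdT (dir m j) (fun r => c r j) q) p
        - pdT (dir m j) (fun q => c q k * pdT (dir m j) (fun r => c r k) q) p) ∧
      ∫ p, (pdT (dir m j) (fun q => c q k * pdT (dir m k) (fun r => c r j) q) p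
        - pdT (dir m k) (fun q => c q k * pdT (dir m j) (fun r => c r j) q) p
        - pdT (dir m j) (fun q => c q k * pdT (dir m j) (fun r => c r k) q) p) = 0 := by
    intro j k
    obtain ⟨h1, h1'⟩ := hvec j k k j
    obtain ⟨h2, h2'⟩ := hvec k k j j
    obtain ⟨h3, h3'⟩ := hvec j k j k
    refine ⟨(h1.sub h2).sub h3, ?_⟩
    rw [integral_sub ?_ h3, integral_sub h1 h2, h1', h2', h3', sub_zero, sub_zero]
    exact h1.sub h2
  have hsum : ∀ g : Fin (m + 2) → Tot m → ℝ, (∀ i, Integrable (g i) ∧ ∫ p, g i p = 0) →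
      Integrable (fun p => ∑ i, g i p) ∧ ∫ p, ∑ i, g i p = 0 := fun g hg =>
    ⟨integrable_finsetSum _ fun i _ => (hg i).1, by
      rw [integral_finsetSum _ fun i _ => (hg i).1]; exact Finset.sum_eq_zero fun i _ => (hg i).2⟩
  obtain ⟨hVI, hV0⟩ := hsum _ fun j => hsum _ fun k => hterm j k
  obtain ⟨hSI, hS0⟩ := hsum _ hscalar
  refine ⟨(hVI.const_mul _).sub hSI, ?_⟩
  simp only [fluxDivergence]
  rw [integral_sub (hVI.const_mul _) hSI, integral_const_mul, hV0, hS0]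
  ring

theorem Lop_quadratic_form_identity_general (ε : ℝ) (hε : 0 < ε)
    (b1 b2 : Plane → ℝ) (ψ : Plane → ℂ)
    (hb1 : ContDiff ℝ (⊤ : ℕ∞) b1) (hb2 : ContDiff ℝ (⊤ : ℕ∞) b2)
    (hψ : ContDiff ℝ (⊤ : ℕ∞) ψ)
    (m : ℕ)
    (c : Tot m → EuclideanSpace ℝ (Fin (m + 2))) (f : Tot m → ℂ)
    (hc : ContDiff ℝ (⊤ : ℕ∞) c) (hf : ContDiff ℝ (⊤ : ℕ∞) f)
    (hcs : HasCompactSupport c) (hfs : HasCompactSupport f) :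
    (∫ p : Tot m,
        (ε ^ 2 * ∑ k : Fin (m + 2), c p k * (Lop ε b1 b2 ψ c f).1 p k
          + ((starRingEnd ℂ) (f p) * (Lop ε b1 b2 ψ c f).2 p).re))
      = (∫ p : Tot m,
          (ε ^ 2 * ∑ j : Fin (m + 2), ∑ k : Fin (m + 2),
              (if (j : ℕ) < (k : ℕ) then
                (pdT (dir m j) (fun q => c q k) p - pdT (dir m k) (fun q => c q j) p) ^ 2
              else 0)
            + ε ^ 2 * (∑ k : Fin (m + 2), pdT (dir m k) (fun q => c q k) p) ^ 2
            + ∑ k : Fin (m + 2), ‖DT b1 b2 k f p‖ ^ 2))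
        - 4 * ∑ k : Fin (m + 2),
            (∫ p : Tot m, c p k * ((starRingEnd ℂ) (DPsi b1 b2 ψ k p) * f p).im)
        + (∫ p : Tot m,
            (‖ψ p.2‖ ^ 2 * ∑ k : Fin (m + 2), (c p k) ^ 2
              + ε⁻¹ ^ 2 * ‖ψ p.2‖ ^ 2 * ‖f p‖ ^ 2
              - 1 / (2 * ε ^ 2) * (1 - ‖ψ p.2‖ ^ 2) * ‖f p‖ ^ 2)) := by
  have h2 : (2 : WithTop ℕ∞) ≤ (⊤ : ℕ∞) := WithTop.coe_le_coe.2 le_top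
  have h1 : (1 : WithTop ℕ∞) ≤ (⊤ : ℕ∞) := one_le_two.trans h2
  have hA := integrable_gradientDensity ε hb1.continuous hb2.continuous (hc.of_le h1)
    (hf.of_le h1) hcs hfs
  have hB := integrable_couplingDensity ψ hb1.continuous hb2.continuous (hψ.of_le h1)
    hc.continuous hf.continuous hcs
  have hB4 : Integrable fun p => 4 * ∑ k, couplingDensity b1 b2 ψ c f k p :=
    (integrable_finsetSum _ fun k _ => hB k).const_mul 4
  have hC := integrable_potentialDensity ε hψ.continuous hc.continuous hf.continuous hcs hfs
  obtain ⟨hDivI, hDiv0⟩ := integrable_fluxDivergence_and_integral_eq_zero ε (hb1.of_le h1)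
    (hb2.of_le h1) (hc.of_le h2) (hf.of_le h2) hcs hfs
  calc _ = ∫ p, (gradientDensity ε b1 b2 c f p - 4 * ∑ k, couplingDensity b1 b2 ψ c f k p
          + potentialDensity ε ψ c f p) + fluxDivergence ε b1 b2 c f p :=
        integral_congr_ae <| ae_of_all _ <| Lop_pairing_density_eq hε.ne' ψ (hb1.of_le h1)
          (hb2.of_le h1) (hc.of_le h2) (hf.of_le h2)
    _ = _ := by
      rw [integral_add ?_ hDivI, hDiv0, add_zero, integral_add ?_ hC, integral_sub hA hB4,
        integral_const_mul, integral_finsetSum _ fun k _ => hB k]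
      · rfl
      · exact hA.sub hB4
      · exact (hA.sub hB4).add hC

/-- the integration-by-parts identity for the quadratic form of `𝕃_ε` on
smooth compactly supported pairs. -/
theorem Lop_quadratic_form_identity (ε : ℝ) (hε : 0 < ε)
    (b1 b2 : Plane → ℝ) (ψ : Plane → ℂ)
    (hb1 : ContDiff ℝ (⊤ : ℕ∞) b1) (hb2 : ContDiff ℝ (⊤ : ℕ∞) b2)
    (hψ : ContDiff ℝ (⊤ : ℕ∞) ψ)
    (m : ℕ) (hm : 1 ≤ m)
    (c : Tot m → EuclideanSpace ℝ (Fin (m + 2))) (f : Tot m → ℂ)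
    (hc : ContDiff ℝ (⊤ : ℕ∞) c) (hf : ContDiff ℝ (⊤ : ℕ∞) f)
    (hcs : HasCompactSupport c) (hfs : HasCompactSupport f) :
    (∫ p : Tot m,
        (ε ^ 2 * ∑ k : Fin (m + 2), c p k * (Lop ε b1 b2 ψ c f).1 p k
          + ((starRingEnd ℂ) (f p) * (Lop ε b1 b2 ψ c f).2 p).re))
      = (∫ p : Tot m,
          (ε ^ 2 * ∑ j : Fin (m + 2), ∑ k : Fin (m + 2),
              (if (j : ℕ) < (k : ℕ) then
                (pdT (dir m j) (fun q => c q k) p - pdT (dir m k) (fun q => c q j) p) ^ 2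
              else 0)
            + ε ^ 2 * (∑ k : Fin (m + 2), pdT (dir m k) (fun q => c q k) p) ^ 2
            + ∑ k : Fin (m + 2), ‖DT b1 b2 k f p‖ ^ 2))
        - 4 * ∑ k : Fin (m + 2),
            (∫ p : Tot m, c p k * ((starRingEnd ℂ) (DPsi b1 b2 ψ k p) * f p).im)
        + (∫ p : Tot m,
            (‖ψ p.2‖ ^ 2 * ∑ k : Fin (m + 2), (c p k) ^ 2
              + ε⁻¹ ^ 2 * ‖ψ p.2‖ ^ 2 * ‖f p‖ ^ 2
              - 1 / (2 * ε ^ 2) * (1 - ‖ψ p.2‖ ^ 2) * ‖f p‖ ^ 2)) :=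
  Lop_quadratic_form_identity_general ε hε b1 b2 ψ hb1 hb2 hψ m c f hc hf hcs hfs
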